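/- arXiv:1307.1032 — 3 statements merged into one kernel-verified Lean document; each statement's English description precedes it below -/
import Mathlib

section
/- For every natural number n ≥ 1, setting a_i = n + 1 − i and b_i = n + 1/2 − i in ℚ for 1 ≤ i ≤ n, one has: ∏_{1 ≤ i < j ≤ n} (b_i² − b_j²) · ∏_{i=1}^n (2·b_i) = 2^{−n} · ∏_{1 ≤ i < j ≤ n} (a_i² − a_j²) · ∏_{i=1}^n (2·a_i). -/
/-!
Put `x k = n - k`, so that `ρ^{Sp(2n)} = (x k)` and `ρ^{SO(2n+1)} = (x k - 1/2)`. Row `i` of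
`ϖ^{Sp(2n)}` is `∏_{j>i} (x i - x j)(x i + x j) · 2 x i`. The differences do not see the shift,
while for the shifted vector the sums together with the diagonal factor `2 (x i - 1/2)` are
`x i + x j - 1 = x i + x (j+1)` for `i ≤ j < n`: the unshifted sums for `i < j ≤ n`, where the
last one is `x i + x n = x i`. So every row loses exactly one factor `2`.
-/

open Finset

section

variable {R : Type*} [CommRing R]

/-- `ϖ^{Sp(2n)}` at the point with coordinates `x 0, …, x (n-1)`. -/
def varpiC (n : ℕ) (x : ℕ → R) : R :=
  ∏ i ∈ range n, (∏ j ∈ Ioo i n, (x i ^ 2 - x j ^ 2)) * (2 * x i)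

theorem varpiC_eq_prod_fin {n : ℕ} (x : ℕ → R) :
    (∏ i : Fin n, ∏ j ∈ Ioi i, (x i ^ 2 - x j ^ 2)) * ∏ i : Fin n, (2 * x i) = varpiC n x := by
  rw [varpiC, prod_mul_distrib (s := range n),
    ← Fin.prod_univ_eq_prod_range (fun i => ∏ j ∈ Ioo i n, (x i ^ 2 - x j ^ 2)),
    ← Fin.prod_univ_eq_prod_range (fun i => 2 * x i)]
  congr 1
  refine prod_congr rfl fun i _ => ?_
  rw [← Fin.map_valEmbedding_Ioi, prod_map]
  rfl

theorem prod_Ico_add_sub_eq_mul_prod_Ioo {x : ℕ → R} {d : R} (hx : ∀ j, x (j + 1) = x j - d)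
    {n i : ℕ} (hxn : x n = 0) (hi : i < n) :
    ∏ j ∈ Ico i n, (x i + x j - d) = x i * ∏ j ∈ Ioo i n, (x i + x j) :=
  calc ∏ j ∈ Ico i n, (x i + x j - d)
      = ∏ j ∈ Ico i n, (x i + x (j + 1)) := prod_congr rfl fun j _ => by rw [hx]; ring
    _ = ∏ j ∈ Ico (i + 1) (n + 1), (x i + x j) := prod_Ico_add' (fun j => x i + x j) i n 1
    _ = x i * ∏ j ∈ Ioo i n, (x i + x j) := by
      rw [prod_Ico_succ_top hi, hxn, add_zero, mul_comm, Nat.succ_eq_add_one,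
        Ico_add_one_left_eq_Ioo]

theorem two_mul_varpiC_row_sub {x : ℕ → R} {c : R} (hx : ∀ j, x (j + 1) = x j - 2 * c)
    {n i : ℕ} (hxn : x n = 0) (hi : i < n) :
    2 * ((∏ j ∈ Ioo i n, ((x i - c) ^ 2 - (x j - c) ^ 2)) * (2 * (x i - c)))
      = (∏ j ∈ Ioo i n, (x i ^ 2 - x j ^ 2)) * (2 * x i) := by
  have hrow := prod_Ico_add_sub_eq_mul_prod_Ioo hx hxn hi
  rw [prod_eq_prod_Ico_succ_bot hi, Ico_add_one_left_eq_Ioo] at hrow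
  calc 2 * ((∏ j ∈ Ioo i n, ((x i - c) ^ 2 - (x j - c) ^ 2)) * (2 * (x i - c)))
      = 2 * (∏ j ∈ Ioo i n, (x i - x j)) * ((x i + x i - 2 * c) *
          ∏ j ∈ Ioo i n, (x i + x j - 2 * c)) := by
        rw [← prod_congr rfl fun j _ => (by ring : (x i - x j) * (x i + x j - 2 * c) =
          (x i - c) ^ 2 - (x j - c) ^ 2), prod_mul_distrib]
        ring
    _ = (∏ j ∈ Ioo i n, (x i ^ 2 - x j ^ 2)) * (2 * x i) := by
        rw [hrow, ← prod_congr rfl fun j _ =>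
          (by ring : (x i - x j) * (x i + x j) = x i ^ 2 - x j ^ 2), prod_mul_distrib]
        ring

theorem two_pow_mul_varpiC_sub {x : ℕ → R} {c : R} (hx : ∀ j, x (j + 1) = x j - 2 * c)
    {n : ℕ} (hxn : x n = 0) :
    2 ^ n * varpiC n (fun k => x k - c) = varpiC n x := by
  have htwo : (2 : R) ^ n = ∏ _i ∈ range n, 2 := by rw [prod_const, card_range]
  rw [varpiC, varpiC, htwo, ← prod_mul_distrib]
  exact prod_congr rfl fun i hi => two_mul_varpiC_row_sub hx hxn (mem_range.mp hi)

end

theorem varpiC_at_rhoB_eq_two_pow_neg_n_mul_varpiC_at_rhoC_general (n : ℕ)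
    (a b : Fin n → ℚ)
    (ha : ∀ i, a i = (n : ℚ) + 1 - ((i : ℕ) + 1))
    (hb : ∀ i, b i = (n : ℚ) + 1 / 2 - ((i : ℕ) + 1)) :
    (∏ i : Fin n, ∏ j ∈ Finset.Ioi i, (b i ^ 2 - b j ^ 2)) * ∏ i : Fin n, (2 * b i)
      = (2 : ℚ) ^ (-(n : ℤ)) *
        ((∏ i : Fin n, ∏ j ∈ Finset.Ioi i, (a i ^ 2 - a j ^ 2)) * ∏ i : Fin n, (2 * a i)) := by
  set x : ℕ → ℚ := fun k => n - k with hx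
  have hxa : ∀ i : Fin n, a i = x i := fun i => by rw [ha, hx]; ring
  have hxb : ∀ i : Fin n, b i = x i - 1 / 2 := fun i => by rw [hb, hx]; ring
  have hstep : ∀ j, x (j + 1) = x j - 2 * (1 / 2) := fun j => by rw [hx]; push_cast; ring
  have hxn : x n = 0 := sub_self _
  simp only [hxa, hxb]
  rw [varpiC_eq_prod_fin, varpiC_eq_prod_fin (fun k => x k - 1 / 2),
    ← two_pow_mul_varpiC_sub hstep hxn, zpow_neg, zpow_natCast,
    inv_mul_cancel_left₀ (by positivity)]

/-- Lemma 6.6 (i): with `a i = n + 1 - i` the coordinates of `ρ^{Sp(2n)}` and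
`b i = n + 1/2 - i` the coordinates of `ρ^{SO(2n+1)}`, one has
`ϖ^{Sp(2n)}(ρ^{SO(2n+1)}) = 2^{-n} · ϖ^{Sp(2n)}(ρ^{Sp(2n)})`. -/
theorem varpiC_at_rhoB_eq_two_pow_neg_n_mul_varpiC_at_rhoC (n : ℕ) (hn : 1 ≤ n)
    (a b : Fin n → ℚ)
    (ha : ∀ i, a i = (n : ℚ) + 1 - ((i : ℕ) + 1))
    (hb : ∀ i, b i = (n : ℚ) + 1 / 2 - ((i : ℕ) + 1)) :
    (∏ i : Fin n, ∏ j ∈ Finset.Ioi i, (b i ^ 2 - b j ^ 2)) * ∏ i : Fin n, (2 * b i)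
      = (2 : ℚ) ^ (-(n : ℤ)) *
        ((∏ i : Fin n, ∏ j ∈ Finset.Ioi i, (a i ^ 2 - a j ^ 2)) * ∏ i : Fin n, (2 * a i)) :=
  varpiC_at_rhoB_eq_two_pow_neg_n_mul_varpiC_at_rhoC_general n a b ha hb
end

section
/- For every natural number n ≥ 1, setting a_i = n + 1 − i and b_i = n + 1/2 − i in ℚ for 1 ≤ i ≤ n, one has: ∏_{1 ≤ i < j ≤ n} (b_i² − b_j²) · ∏_{i=1}^n b_i = 2^{−2n} · ∏_{1 ≤ i < j ≤ n} (a_i² − a_j²) · ∏_{i=1}^n (2·a_i). -/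
open Finset

/-!
After reversing the index, `b` and `a` become `k + 1/2` and `k + 1`, and both sides split into
rows: `b_k ∏_{j<k} (b_k² - b_j²) = (k + 1/2) ∏_{j<k} (k - j)(k + j + 1)` on the left and
`2 a_k ∏_{j<k} (a_k² - a_j²) = 2 (k + 1) ∏_{j<k} (k - j)(k + j + 2)` on the right.
Each left row is a quarter of the right one: the factors `k - j` are common, and
`(2k + 1) ∏_{j<k} (k + 1 + j) = (k + 1) ∏_{j<k} (k + 2 + j)`, both sides being the rising
product `(k + 1)(k + 2) ⋯ (2k + 1)`.
-/

lemma add_mul_prod_range_add_eq_mul_prod_range_add_add_one {R : Type*} [CommSemiring R] (x : R)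
    (m : ℕ) :
    (x + m) * ∏ k ∈ range m, (x + k) = x * ∏ k ∈ range m, (x + k + 1) := by
  calc (x + m) * ∏ k ∈ range m, (x + k) = ∏ k ∈ range (m + 1), (x + k) := by
        rw [prod_range_succ, mul_comm]
    _ = x * ∏ k ∈ range m, (x + k + 1) := by
        rw [prod_range_succ', mul_comm]; simp [add_assoc]

namespace Fin

lemma prod_Ioi_eq_prod_Iio_rev {M : Type*} [CommMonoid M] {n : ℕ} (g : Fin n → Fin n → M) :
    ∏ i, ∏ j ∈ Ioi i, g i j = ∏ i : Fin n, ∏ j ∈ Iio i, g i.rev j.rev := by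
  rw [← Equiv.prod_comp revPerm]
  refine prod_congr rfl fun i _ => ?_
  rw [revPerm_apply, ← map_revPerm_Iio, prod_map]
  rfl

lemma prod_Iio_val {M : Type*} [CommMonoid M] {n : ℕ} (h : ℕ → M) (i : Fin n) :
    ∏ j ∈ Iio i, h j = ∏ k ∈ range i, h k := by
  rw [← Nat.Iio_eq_range, ← map_valEmbedding_Iio, prod_map]
  rfl

lemma cast_val_rev {R : Type*} [Ring R] {n : ℕ} (i : Fin n) :
    ((i.rev : ℕ) : R) = n - (i + 1) := by
  rw [val_rev, Nat.cast_sub (by omega), Nat.cast_add, Nat.cast_one]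

end Fin

lemma rowB_eq_quarter_mul_rowC {n : ℕ} (i : Fin n) :
    (∏ j ∈ Iio i, (((i : ℚ) + 1 / 2) ^ 2 - ((j : ℚ) + 1 / 2) ^ 2)) * ((i : ℚ) + 1 / 2)
      = 4⁻¹ * ((∏ j ∈ Iio i, (((i : ℚ) + 1) ^ 2 - ((j : ℚ) + 1) ^ 2)) * (2 * ((i : ℚ) + 1))) := by
  set m : ℕ := (i : ℕ)
  have hB : ∏ j ∈ Iio i, (((m : ℚ) + 1 / 2) ^ 2 - ((j : ℚ) + 1 / 2) ^ 2)
      = (∏ j ∈ Iio i, ((m : ℚ) - j)) * ∏ k ∈ range m, ((m + 1 : ℚ) + k) := by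
    rw [← Fin.prod_Iio_val (fun k : ℕ => (m + 1 : ℚ) + k), ← prod_mul_distrib]
    exact prod_congr rfl fun j _ => by ring
  have hC : ∏ j ∈ Iio i, (((m : ℚ) + 1) ^ 2 - ((j : ℚ) + 1) ^ 2)
      = (∏ j ∈ Iio i, ((m : ℚ) - j)) * ∏ k ∈ range m, ((m + 1 : ℚ) + k + 1) := by
    rw [← Fin.prod_Iio_val (fun k : ℕ => (m + 1 : ℚ) + k + 1), ← prod_mul_distrib]
    exact prod_congr rfl fun j _ => by ring
  rw [hB, hC]
  linear_combination (∏ j ∈ Iio i, ((m : ℚ) - j)) / 2 *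
    add_mul_prod_range_add_eq_mul_prod_range_add_add_one ((m : ℚ) + 1) m

theorem varpiB_at_rhoB_eq_two_pow_neg_two_n_mul_varpiC_at_rhoC_general (n : ℕ)
    (a b : Fin n → ℚ)
    (ha : ∀ i, a i = (n : ℚ) + 1 - ((i : ℕ) + 1))
    (hb : ∀ i, b i = (n : ℚ) + 1 / 2 - ((i : ℕ) + 1)) :
    (∏ i : Fin n, ∏ j ∈ Finset.Ioi i, (b i ^ 2 - b j ^ 2)) * ∏ i : Fin n, b i
      = (2 : ℚ) ^ (-(2 * n : ℤ)) *
        ((∏ i : Fin n, ∏ j ∈ Finset.Ioi i, (a i ^ 2 - a j ^ 2)) * ∏ i : Fin n, (2 * a i)) := by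
  have ha' (i : Fin n) : a i.rev = (i : ℚ) + 1 := by rw [ha, Fin.cast_val_rev]; ring
  have hb' (i : Fin n) : b i.rev = (i : ℚ) + 1 / 2 := by rw [hb, Fin.cast_val_rev]; ring
  have hpow : (2 : ℚ) ^ (-(2 * n : ℤ)) = 4⁻¹ ^ n := by
    rw [zpow_neg, zpow_mul, zpow_natCast, inv_pow]; norm_num
  rw [Fin.prod_Ioi_eq_prod_Iio_rev, Fin.prod_Ioi_eq_prod_Iio_rev, ← Equiv.prod_comp Fin.revPerm b,
    ← Equiv.prod_comp Fin.revPerm (fun i => 2 * a i)]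
  simp only [Fin.revPerm_apply, ha', hb']
  rw [← prod_mul_distrib, ← prod_mul_distrib, prod_congr rfl fun i _ => rowB_eq_quarter_mul_rowC i,
    prod_mul_distrib, prod_const, card_univ, Fintype.card_fin, hpow]

/-- Lemma 6.6 (ii): with `a i = n + 1 - i` the coordinates of `ρ^{Sp(2n)}` and
`b i = n + 1/2 - i` the coordinates of `ρ^{SO(2n+1)}`, one has
`ϖ^{SO(2n+1)}(ρ^{SO(2n+1)}) = 2^{-2n} · ϖ^{Sp(2n)}(ρ^{Sp(2n)})`. -/
theorem varpiB_at_rhoB_eq_two_pow_neg_two_n_mul_varpiC_at_rhoC (n : ℕ) (hn : 1 ≤ n)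
    (a b : Fin n → ℚ)
    (ha : ∀ i, a i = (n : ℚ) + 1 - ((i : ℕ) + 1))
    (hb : ∀ i, b i = (n : ℚ) + 1 / 2 - ((i : ℕ) + 1)) :
    (∏ i : Fin n, ∏ j ∈ Finset.Ioi i, (b i ^ 2 - b j ^ 2)) * ∏ i : Fin n, b i
      = (2 : ℚ) ^ (-(2 * n : ℤ)) *
        ((∏ i : Fin n, ∏ j ∈ Finset.Ioi i, (a i ^ 2 - a j ^ 2)) * ∏ i : Fin n, (2 * a i)) :=
  varpiB_at_rhoB_eq_two_pow_neg_two_n_mul_varpiC_at_rhoC_general n a b ha hb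
end

section
/- For every natural number n ≥ 1, setting b_i = n + 1/2 − i in ℚ for 1 ≤ i ≤ n, one has: ∏_{1 ≤ i < j ≤ n} (b_i² − b_j²) · ∏_{i=1}^n b_i = 2^{−n} · ∏_{k=1}^n (2k − 1)!. -/
/-!
Removing the first coordinate `b₀ = n + 1/2` of `ρ` for `B_{n+1}` leaves `ρ` for `Bₙ`, and the
factors involving it contribute `b₀ · ∏ⱼ (b₀ - bⱼ)(b₀ + bⱼ) = (n + 1/2) · n! · (2n)!/n!
= (2n+1)!/2`, which is exactly the new factor on the right-hand side.
-/

open Finset Nat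

theorem Nat.prod_range_succ_mul_two_mul_sub (n : ℕ) :
    ∏ j ∈ range n, ((j + 1) * (2 * n - j)) = (2 * n)! := by
  rw [prod_mul_distrib, prod_range_add_one_eq_factorial, ← Nat.descFactorial_eq_prod_range,
    ← Nat.factorial_mul_descFactorial (show n ≤ 2 * n by omega), show 2 * n - n = n by omega]

section varpiB

variable {R : Type*} [CommRing R]

/-- `b i ^ 2 - b j ^ 2` is the product of the coroots `ε_i + ε_j` and `ε_i - ε_j` evaluated at `b`. -/
def varpiB {n : ℕ} (b : Fin n → R) : R :=
  (∏ i, ∏ j ∈ Ioi i, (b i ^ 2 - b j ^ 2)) * ∏ i, b i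

theorem varpiB_succ {n : ℕ} (b : Fin (n + 1) → R) :
    varpiB b = (∏ j : Fin n, (b 0 ^ 2 - b j.succ ^ 2)) * b 0 * varpiB (fun i => b i.succ) := by
  simp only [varpiB, Fin.prod_univ_succ (n := n), Fin.prod_Ioi_zero, Fin.prod_Ioi_succ]
  ring

end varpiB

def rhoB (n : ℕ) (i : Fin n) : ℚ := n + 1 / 2 - ((i : ℕ) + 1)

theorem rhoB_zero (n : ℕ) : rhoB (n + 1) 0 = n + 1 / 2 := by
  simp only [rhoB, Fin.val_zero]
  push_cast
  ring

theorem rhoB_succ (n : ℕ) (i : Fin n) : rhoB (n + 1) i.succ = rhoB n i := by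
  simp only [rhoB, Fin.val_succ]
  push_cast
  ring

theorem prod_sq_sub_rhoB_sq (n : ℕ) :
    ∏ j : Fin n, (((n : ℚ) + 1 / 2) ^ 2 - rhoB n j ^ 2) = ((2 * n)! : ℚ) := by
  have factor (j : Fin n) : ((n : ℚ) + 1 / 2) ^ 2 - rhoB n j ^ 2
      = ((((j : ℕ) + 1) * (2 * n - j) : ℕ) : ℚ) := by
    rw [Nat.cast_mul, Nat.cast_sub (by omega)]
    push_cast [rhoB]
    ring
  rw [prod_congr rfl fun j _ => factor j, ← Nat.cast_prod,
    Fin.prod_univ_eq_prod_range (fun j => (j + 1) * (2 * n - j)),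
    Nat.prod_range_succ_mul_two_mul_sub]

theorem two_pow_mul_varpiB_rhoB (n : ℕ) :
    2 ^ n * varpiB (rhoB n) = ∏ k : Fin n, ((2 * k + 1)! : ℚ) := by
  induction n with
  | zero => simp [varpiB]
  | succ n ih =>
    have odd_factorial : ((2 * n + 1)! : ℚ) = 2 * (n + 1 / 2) * (2 * n)! := by
      push_cast [Nat.factorial_succ]
      ring
    rw [varpiB_succ, Fin.prod_univ_castSucc]
    simp only [rhoB_zero, rhoB_succ, prod_sq_sub_rhoB_sq, Fin.val_castSucc, Fin.val_last,
      odd_factorial, ← ih]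
    ring

theorem varpiB_at_rhoB_closed_form_general (n : ℕ)
    (b : Fin n → ℚ)
    (hb : ∀ i, b i = (n : ℚ) + 1 / 2 - ((i : ℕ) + 1)) :
    (∏ i : Fin n, ∏ j ∈ Finset.Ioi i, (b i ^ 2 - b j ^ 2)) * ∏ i : Fin n, b i
      = (2 : ℚ) ^ (-(n : ℤ)) * ∏ k : Fin n, ((2 * ((k : ℕ) + 1) - 1).factorial : ℚ) := by
  obtain rfl : b = rhoB n := funext hb
  have odd (k : ℕ) : 2 * (k + 1) - 1 = 2 * k + 1 := by omega
  rw [zpow_neg, zpow_natCast, eq_inv_mul_iff_mul_eq₀ (by positivity)]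
  simp only [odd]
  exact two_pow_mul_varpiB_rhoB n

/-- The Steinberg–Macdonald closed form for type `Bₙ`: with `b i = n + 1/2 - i`
the coordinates of `ρ^{SO(2n+1)}`, one has
`ϖ^{SO(2n+1)}(ρ^{SO(2n+1)}) = 2^{-n} · ∏_{k=1}^n (2k-1)!`. -/
theorem varpiB_at_rhoB_closed_form (n : ℕ) (hn : 1 ≤ n)
    (b : Fin n → ℚ)
    (hb : ∀ i, b i = (n : ℚ) + 1 / 2 - ((i : ℕ) + 1)) :
    (∏ i : Fin n, ∏ j ∈ Finset.Ioi i, (b i ^ 2 - b j ^ 2)) * ∏ i : Fin n, b i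
      = (2 : ℚ) ^ (-(n : ℤ)) * ∏ k : Fin n, ((2 * ((k : ℕ) + 1) - 1).factorial : ℚ) :=
  varpiB_at_rhoB_closed_form_general n b hb
end
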